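/- Let T be a triangulated category, S a thick subcategory with a torsion pair S = X ⊥ Y, and T with torsion pairs T = X ⊥ X^⊥ = ^⊥Y ⊥ Y. If additionally X[1] ⊆ X (i.e. S = X ⊥ Y is a co-t-structure), then X[1] ⊆ X * P and Y ⊆ P * Y[1], where P := X[1] ∩ Y. -/

import Mathlib

/-!
Each inclusion comes from a single decomposition triangle of `S = X ⊥ Y`, using that `X` and `Y`
are the orthogonals of each other inside `S`.
For `e ∈ X`, decompose `e[1]` as `x → e[1] → c → x[1]`: as `Hom(e[1], Y[1]) = Hom(x[1], Y[1]) = 0`,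
also `Hom(c, Y[1]) = 0`, so `c[-1] ∈ X` and `c ∈ X[1] ∩ Y`.
For `y ∈ Y`, decompose `y[-1]` as `x → y[-1] → z → x[1]` and rotate to `z → x[1] → y → z[1]`:
as `Hom(X, z) = Hom(X, y) = 0`, also `x[1] ∈ Y`.
-/

open CategoryTheory Limits Pretriangulated ZeroObject

namespace IY

variable {T : Type*} [Category T] [Preadditive T] [HasZeroObject T] [HasShift T ℤ]
  [∀ n : ℤ, (shiftFunctor T n).Additive] [Pretriangulated T]

/-- Right Hom-orthogonal: `A^⊥`. -/
def rightPerp (A : Set T) : Set T := {Y | ∀ X ∈ A, ∀ f : X ⟶ Y, f = 0}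

/-- Left Hom-orthogonal: `^⊥B`. -/
def leftPerp (B : Set T) : Set T := {X | ∀ Y ∈ B, ∀ f : X ⟶ Y, f = 0}

/-- The shift `A[n]` of a class of objects. -/
def shiftSet (A : Set T) (n : ℤ) : Set T := (fun X => (X⟦n⟧ : T)) '' A

/-- `Hom(A, B) = 0`. -/
def homOrth (A B : Set T) : Prop := ∀ X ∈ A, ∀ Y ∈ B, ∀ f : X ⟶ Y, f = 0

/-- `A * B`: objects `E` admitting a distinguished triangle `A → E → B → A[1]`
with `A ∈ A`, `B ∈ B`. -/
def starSet (A B : Set T) : Set T :=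
  {E | ∃ (a b : T) (_ : a ∈ A) (_ : b ∈ B) (f : a ⟶ E) (g : E ⟶ b)
    (h : b ⟶ a⟦(1 : ℤ)⟧), Triangle.mk f g h ∈ distTriang T}

/-- A torsion pair `S = A ⊥ B` on the class of objects `S`:
`S = A * B`, `Hom(A,B) = 0`, `A = ^⊥B ∩ S` and `B = A^⊥ ∩ S`. -/
structure IsTorsionPair (S A B : Set T) : Prop where
  subA : A ⊆ S
  subB : B ⊆ S
  orth : homOrth A B
  ext : S ⊆ starSet A B
  eqA : A = leftPerp B ∩ S
  eqB : B = rightPerp A ∩ S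

/-- A thick subcategory: closed under isomorphisms, shifts, extensions (cones) and
direct summands (retracts), and contains the zero object. -/
structure IsThick (S : Set T) : Prop where
  zero : (0 : T) ∈ S
  iso : ∀ ⦃X Y : T⦄, (X ≅ Y) → X ∈ S → Y ∈ S
  shift : ∀ X ∈ S, ∀ n : ℤ, (X⟦n⟧ : T) ∈ S
  ext₂ : ∀ Tr : Triangle T, Tr ∈ (distTriang T) → Tr.obj₁ ∈ S → Tr.obj₃ ∈ S → Tr.obj₂ ∈ S
  retract : ∀ ⦃X Y : T⦄ (i : X ⟶ Y) (r : Y ⟶ X), i ≫ r = 𝟙 X → Y ∈ S → X ∈ S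

/-- The class of morphisms whose cone lies in `S`; the Verdier quotient `T/S` is the
localization of `T` at this class. -/
def qis (S : Set T) : MorphismProperty T := fun X Y f =>
  ∃ (Z : T) (g : Y ⟶ Z) (h : Z ⟶ X⟦(1 : ℤ)⟧),
    Triangle.mk f g h ∈ (distTriang T) ∧ Z ∈ S

/-- A morphism factors through an object of `P`. -/
def factorsThrough (P : Set T) {M N : T} (f : M ⟶ N) : Prop :=
  ∃ (P₀ : T) (_ : P₀ ∈ P) (g : M ⟶ P₀) (h : P₀ ⟶ N), g ≫ h = f

end IY

namespace IY

section Perp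

variable {T : Type*} [Category T] [Preadditive T]

lemma leftPerp_of_iso {B : Set T} {a b : T} (e : a ≅ b) (ha : a ∈ leftPerp B) :
    b ∈ leftPerp B := fun z hz f => by
  simpa using congrArg (e.inv ≫ ·) (ha z hz (e.hom ≫ f))

lemma rightPerp_of_iso {A : Set T} {a b : T} (e : a ≅ b) (ha : a ∈ rightPerp A) :
    b ∈ rightPerp A := fun z hz f => by
  simpa using congrArg (· ≫ e.hom) (ha z hz (f ≫ e.inv))

variable [HasShift T ℤ] [∀ n : ℤ, (shiftFunctor T n).Additive]

lemma shift_mem_leftPerp_shiftSet_iff {B : Set T} {a : T} (n : ℤ) :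
    (a⟦n⟧ : T) ∈ leftPerp (shiftSet B n) ↔ a ∈ leftPerp B := by
  constructor
  · intro ha z hz f
    apply (shiftFunctor T n).map_injective
    rw [ha _ ⟨z, hz, rfl⟩ (f⟦n⟧'), Functor.map_zero]
  · rintro ha _ ⟨z, hz, rfl⟩ φ
    obtain ⟨ψ, rfl⟩ := (shiftFunctor T n).map_surjective φ
    rw [ha z hz ψ, Functor.map_zero]

end Perp

variable {T : Type*} [Category T] [Preadditive T] [HasZeroObject T] [HasShift T ℤ]
  [∀ n : ℤ, (shiftFunctor T n).Additive] [Pretriangulated T]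

lemma mem_leftPerp_of_distTriang {B : Set T} (Tr : Triangle T)
    (hTr : Tr ∈ distTriang T) (h₁ : Tr.obj₁ ∈ leftPerp B)
    (h₃ : Tr.obj₃ ∈ leftPerp B) :
    Tr.obj₂ ∈ leftPerp B := by
  intro z hz f
  obtain ⟨g, rfl⟩ := Triangle.yoneda_exact₂ Tr hTr f (h₁ z hz _)
  rw [h₃ z hz g, comp_zero]

lemma mem_rightPerp_of_distTriang {A : Set T} (Tr : Triangle T)
    (hTr : Tr ∈ distTriang T) (h₁ : Tr.obj₁ ∈ rightPerp A)
    (h₃ : Tr.obj₃ ∈ rightPerp A) :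
    Tr.obj₂ ∈ rightPerp A := by
  intro z hz f
  obtain ⟨g, rfl⟩ := Triangle.coyoneda_exact₂ Tr hTr f (h₃ z hz _)
  rw [h₁ z hz g, zero_comp]

lemma mem_starSet_of_distTriang {A B : Set T} (Tr : Triangle T) (hTr : Tr ∈ distTriang T)
    {a E b : T} (ea : Tr.obj₁ ≅ a) (eE : Tr.obj₂ ≅ E) (eb : Tr.obj₃ ≅ b)
    (ha : a ∈ A) (hb : b ∈ B) : E ∈ starSet A B := by
  let e : Tr ≅ Triangle.mk (ea.inv ≫ Tr.mor₁ ≫ eE.hom) (eE.inv ≫ Tr.mor₂ ≫ eb.hom)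
      (eb.inv ≫ Tr.mor₃ ≫ ea.hom⟦(1 : ℤ)⟧') :=
    Triangle.isoMk _ _ ea eE eb (Iso.hom_inv_id_assoc _ _).symm
      (Iso.hom_inv_id_assoc _ _).symm (Iso.hom_inv_id_assoc _ _).symm
  exact ⟨a, b, ha, hb, _, _, _, isomorphic_distinguished _ hTr _ e.symm⟩

namespace IsTorsionPair

variable {S X Y : Set T}

lemma fst_subset_leftPerp (h : IsTorsionPair S X Y) : X ⊆ leftPerp Y :=
  fun _ hx => (h.eqA ▸ hx).1

lemma snd_subset_rightPerp (h : IsTorsionPair S X Y) : Y ⊆ rightPerp X :=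
  fun _ hy => (h.eqB ▸ hy).1

lemma shiftSet_fst_subset_starSet (h : IsTorsionPair S X Y)
    (hS : ∀ a ∈ S, ∀ n : ℤ, (a⟦n⟧ : T) ∈ S) :
    shiftSet X 1 ⊆ starSet X (shiftSet X 1 ∩ Y) := by
  rintro _ ⟨e, he, rfl⟩
  obtain ⟨x, c, hx, hc, f, g, k, hT⟩ := h.ext (hS e (h.subA he) 1)
  let ι : (c⟦(-1 : ℤ)⟧⟦(1 : ℤ)⟧ : T) ≅ c :=
    (shiftFunctorCompIsoId T (-1 : ℤ) 1 (by omega)).app c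
  have hc' : c ∈ leftPerp (shiftSet Y 1) :=
    mem_leftPerp_of_distTriang _ (rot_of_distTriang _ hT)
      ((shift_mem_leftPerp_shiftSet_iff 1).2 (h.fst_subset_leftPerp he))
      ((shift_mem_leftPerp_shiftSet_iff 1).2 (h.fst_subset_leftPerp hx))
  have hcX : (c⟦(-1 : ℤ)⟧ : T) ∈ X := by
    rw [h.eqA]
    exact ⟨(shift_mem_leftPerp_shiftSet_iff 1).1 (leftPerp_of_iso ι.symm hc'),
      hS c (h.subB hc) _⟩
  have hcY : (c⟦(-1 : ℤ)⟧⟦(1 : ℤ)⟧ : T) ∈ Y := by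
    rw [h.eqB]
    exact ⟨rightPerp_of_iso ι.symm (h.snd_subset_rightPerp hc), hS _ (h.subA hcX) 1⟩
  exact mem_starSet_of_distTriang _ hT (Iso.refl _) (Iso.refl _) ι.symm hx
    ⟨⟨_, hcX, rfl⟩, hcY⟩

lemma snd_subset_starSet_shiftSet (h : IsTorsionPair S X Y)
    (hS : ∀ a ∈ S, ∀ n : ℤ, (a⟦n⟧ : T) ∈ S) :
    Y ⊆ starSet (shiftSet X 1 ∩ Y) (shiftSet Y 1) := by
  intro y hy
  obtain ⟨x, z, hx, hz, f, g, k, hT⟩ := h.ext (hS y (h.subB hy) (-1))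
  let ι : (y⟦(-1 : ℤ)⟧⟦(1 : ℤ)⟧ : T) ≅ y :=
    (shiftFunctorCompIsoId T (-1 : ℤ) 1 (by omega)).app y
  have hT₂ := rot_of_distTriang _ (rot_of_distTriang _ hT)
  have hxY : (x⟦(1 : ℤ)⟧ : T) ∈ Y := by
    rw [h.eqB]
    exact ⟨mem_rightPerp_of_distTriang _ hT₂ (h.snd_subset_rightPerp hz)
      (rightPerp_of_iso ι.symm (h.snd_subset_rightPerp hy)), hS x (h.subA hx) 1⟩
  exact mem_starSet_of_distTriang _ (rot_of_distTriang _ hT₂) (Iso.refl _) ι (Iso.refl _)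
    ⟨⟨x, hx, rfl⟩, hxY⟩ ⟨z, hz, rfl⟩

end IsTorsionPair

theorem stmt3_general (S X Y : Set T) (hS : IsThick S)
    (h1 : IsTorsionPair S X Y) :
    shiftSet X 1 ⊆ starSet X (shiftSet X 1 ∩ Y) ∧
    Y ⊆ starSet (shiftSet X 1 ∩ Y) (shiftSet Y 1) :=
  ⟨h1.shiftSet_fst_subset_starSet hS.shift, h1.snd_subset_starSet_shiftSet hS.shift⟩

/-- If moreover `X[1] ⊆ X` (co-t-structure case), then
`X[1] ⊆ X * P` and `Y ⊆ P * Y[1]`, where `P = X[1] ∩ Y`. -/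
theorem stmt3 (S X Y : Set T) (hS : IsThick S)
    (h1 : IsTorsionPair S X Y) (hco : shiftSet X 1 ⊆ X)
    (h2 : IsTorsionPair Set.univ X (rightPerp X))
    (h3 : IsTorsionPair Set.univ (leftPerp Y) Y) :
    shiftSet X 1 ⊆ starSet X (shiftSet X 1 ∩ Y) ∧
    Y ⊆ starSet (shiftSet X 1 ∩ Y) (shiftSet Y 1) :=
  stmt3_general S X Y hS h1

end IY
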